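/- For each n ≥ 1 and all real x, the n-th derivative of arctan at x equals (-1)^{n-1} · n! · p_{n-1}(x) / (1+x²)^n. -/

import Mathlib

open Finset Polynomial Real

noncomputable def p (n : ℕ) (x : ℝ) : ℝ :=
  ∑ k ∈ (Finset.range (n+1)).filter (fun k => Even k),
    (n.choose k : ℝ) * (-1 : ℝ)^(k/2) / (k + 1) * x^(n-k)

/-!
Since `1 / (1 + x²) = Im (1 / (x - i))`, the derivatives of `arctan` are
`arctan⁽ᵐ⁺¹⁾ x = (-1)ᵐ m! Im ((x - i)^(-(m+1)))`. Writing
`(x - i)^(-(m+1)) = (x + i)^(m+1) / (1 + x²)^(m+1)` and expanding `(i + x)^(m+1)` binomially,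
only the odd powers of `i` contribute to the imaginary part, and `C(m+1, k+1) = (m+1) C(m, k) / (k+1)`
turns that contribution into `(m+1) p_m(x)`.
-/

namespace Complex

lemma im_I_pow_succ (k : ℕ) : (I ^ (k + 1)).im = if Even k then (-1 : ℝ) ^ (k / 2) else 0 := by
  obtain ⟨a, rfl | rfl⟩ := Nat.even_or_odd' k
  · rw [pow_succ, pow_mul, I_sq, if_pos (even_two_mul a), Nat.mul_div_cancel_left a two_pos,
      ← ofReal_one, ← ofReal_neg, ← ofReal_pow, im_ofReal_mul, I_im, mul_one]
  · rw [pow_succ, pow_succ, pow_mul, I_sq, if_neg (by simp), ← ofReal_one, ← ofReal_neg,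
      ← ofReal_pow, mul_assoc, I_mul_I, mul_neg_one, neg_im, ofReal_im, neg_zero]

lemma ofReal_sub_I_ne_zero (x : ℝ) : (x : ℂ) - I ≠ 0 := fun h => by
  simpa using congrArg im h

lemma inv_ofReal_sub_I (x : ℝ) : ((x : ℂ) - I)⁻¹ = ((x : ℂ) + I) / ((1 + x ^ 2 : ℝ) : ℂ) := by
  have hconj : ((x : ℂ) - I) * (x + I) = ((1 + x ^ 2 : ℝ) : ℂ) := by
    push_cast
    linear_combination -I_sq
  rw [eq_div_iff (by exact_mod_cast (by positivity : (1 + x ^ 2 : ℝ) ≠ 0)), ← hconj,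
    inv_mul_cancel_left₀ (ofReal_sub_I_ne_zero x)]

lemma hasDerivAt_im_inv_ofReal_sub_I_pow (m : ℕ) (x : ℝ) :
    HasDerivAt (fun y : ℝ => ((((y : ℂ) - I) ^ (m + 1))⁻¹).im)
      (-(m + 1) * ((((x : ℂ) - I) ^ (m + 2))⁻¹).im) x := by
  have hpow : HasDerivAt (fun z : ℂ => (z - I) ^ (m + 1)) ((m + 1) * (x - I) ^ m) x := by
    simpa using ((hasDerivAt_id (x : ℂ)).sub_const I).fun_pow (m + 1)
  have hinv := (hpow.fun_inv (pow_ne_zero _ (ofReal_sub_I_ne_zero x))).comp_ofReal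
  have hderiv : -((m + 1) * ((x : ℂ) - I) ^ m) / (((x : ℂ) - I) ^ (m + 1)) ^ 2 =
      ((-(m + 1) : ℝ) : ℂ) * (((x : ℂ) - I) ^ (m + 2))⁻¹ := by
    have := ofReal_sub_I_ne_zero x
    push_cast
    field_simp
    ring
  refine (imCLM.hasFDerivAt.comp_hasDerivAt x hinv).congr_deriv ?_
  rw [imCLM_apply, hderiv, im_ofReal_mul]

end Complex

open Complex

lemma iteratedDeriv_inv_one_add_sq (m : ℕ) (x : ℝ) :
    iteratedDeriv m (fun y : ℝ => (1 + y ^ 2)⁻¹) x =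
      (-1) ^ m * m.factorial * ((((x : ℂ) - I) ^ (m + 1))⁻¹).im := by
  induction m generalizing x with
  | zero =>
    simp only [iteratedDeriv_zero, zero_add, pow_one, inv_ofReal_sub_I, div_ofReal_im, add_im,
      ofReal_im, I_im]
    simp
  | succ m ih =>
    rw [iteratedDeriv_succ, funext ih,
      ((hasDerivAt_im_inv_ofReal_sub_I_pow m x).const_mul _).deriv, Nat.factorial_succ]
    push_cast
    ring

lemma add_one_mul_p (m : ℕ) (x : ℝ) :
    (m + 1) * p m x = ∑ k ∈ (range (m + 1)).filter Even,
      ((m + 1).choose (k + 1) : ℝ) * (-1) ^ (k / 2) * x ^ (m - k) := by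
  rw [p, mul_sum]
  refine sum_congr rfl fun k _ => ?_
  have hchoose : ((m + 1 : ℝ)) * m.choose k = (m + 1).choose (k + 1) * (k + 1) := by
    exact_mod_cast Nat.add_one_mul_choose_eq m k
  field_simp
  linear_combination x ^ (m - k) * hchoose

lemma im_ofReal_add_I_pow (m : ℕ) (x : ℝ) : (((x : ℂ) + I) ^ (m + 1)).im = (m + 1) * p m x := by
  rw [add_one_mul_p, add_comm, add_pow, sum_range_succ', add_im, im_sum, sum_filter]
  refine (add_eq_left.2 (by simp [← ofReal_pow])).trans (sum_congr rfl fun k _ => ?_)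
  rw [Nat.add_sub_add_right, ← ofReal_pow, ← ofReal_natCast, mul_assoc, ← ofReal_mul,
    im_mul_ofReal, im_I_pow_succ]
  split_ifs <;> ring

lemma im_inv_ofReal_sub_I_pow (m : ℕ) (x : ℝ) :
    ((((x : ℂ) - I) ^ (m + 1))⁻¹).im = (m + 1) * p m x / (1 + x ^ 2) ^ (m + 1) := by
  rw [← inv_pow, inv_ofReal_sub_I, div_pow, ← ofReal_pow, div_ofReal_im, im_ofReal_add_I_pow]

theorem arctan_iteratedDeriv_p (n : ℕ) (hn : 1 ≤ n) (x : ℝ) :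
    iteratedDeriv n Real.arctan x =
      (-1 : ℝ)^(n-1) * n.factorial * p (n - 1) x / (1 + x^2)^n := by
  obtain ⟨m, rfl⟩ := Nat.exists_eq_add_of_le' hn
  have hderiv : deriv Real.arctan = fun y => (1 + y ^ 2)⁻¹ := by
    simp only [Real.deriv_arctan, one_div]
  rw [iteratedDeriv_succ', hderiv, iteratedDeriv_inv_one_add_sq, im_inv_ofReal_sub_I_pow,
    Nat.add_sub_cancel, Nat.factorial_succ]
  push_cast
  ring
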